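/- arXiv:1403.7837 — 2 statements merged into one kernel-verified Lean document; each statement's English description precedes it below -/
import Mathlib

section
/- Let h₁,…,hₙ be independent real random variables each with density bounded by ρ₀, and let 0 < s < 1. Let D₁,…,Dₙ be denominators of the form D_k = 2·(sum over i in S_k of h_i) + a_k, where the sets S_k ⊆ {1,…,n} satisfy the hierarchical property that each D_k contains at least one index not appearing in any D_j with j < k. Then E ∏_{k=1}^n |D_k|^{−s} ≤ ρ₁ⁿ, where ρ₁ depends only on ρ₀ and s. -/
/-!
Integrate out the variables one denominator at a time, starting from the last one. A fresh
index `i ∈ S_k` occurs in no earlier denominator, so integrating over `h_i` only sees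
`|2 h_i + c|^{-s}` with `c` fixed by the other variables. Because the density of `h_i` is at
most `ρ₀`, this integral is at most `ρ₀ / (1 - s) + 1` for every `c`: near the singularity
(`|2y + c| ≤ 1`) compare with `ρ₀ ∫_{-1}^{1} |u|^{-s} du / 2`, elsewhere the integrand is at
most `1`. Independence makes the joint law a product measure, so the `n` bounds multiply.
-/

open MeasureTheory ENNReal Function Set

section FreshCoordinate

variable {ι : Type*} [Fintype ι] [DecidableEq ι] {X : ι → Type*} [∀ i, MeasurableSpace (X i)]
  (μ : ∀ i, Measure (X i)) [∀ i, IsProbabilityMeasure (μ i)]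

theorem lintegral_mul_le_of_lintegral_update_le {F G : (∀ i, X i) → ℝ≥0∞}
    (hF : Measurable F) (hG : Measurable G) {i : ι} (hFi : ∀ x y, F (update x i y) = F x)
    {B : ℝ≥0∞} (hGi : ∀ x, ∫⁻ y, G (update x i y) ∂μ i ≤ B) :
    ∫⁻ x, G x * F x ∂Measure.pi μ ≤ B * ∫⁻ x, F x ∂Measure.pi μ := by
  calc ∫⁻ x, G x * F x ∂Measure.pi μ ≤ ∫⁻ x, B * F x ∂Measure.pi μ := by
        refine lintegral_le_of_lmarginal_le {i} (hG.mul hF) (hF.const_mul B) fun x => ?_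
        simp only [lmarginal_singleton, hFi]
        rw [lintegral_mul_const (f := fun y => G (update x i y)) _
            (hG.comp (measurable_update x)), lintegral_const, measure_univ, mul_one]
        gcongr
        exact hGi x
    _ = B * ∫⁻ x, F x ∂Measure.pi μ := lintegral_const_mul B hF

theorem lintegral_prod_le_pow_of_fresh {κ : Type*} [LinearOrder κ]
    {g : κ → (∀ i, X i) → ℝ≥0∞} (hg : ∀ k, Measurable (g k)) {S : κ → Set ι}
    (hgS : ∀ k, DependsOn (g k) (S k)) (hS : ∀ k, ∃ i ∈ S k, ∀ j < k, i ∉ S j) {B : ℝ≥0∞}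
    (hB : ∀ k, ∀ i ∈ S k, ∀ x, ∫⁻ y, g k (update x i y) ∂μ i ≤ B) (T : Finset κ) :
    ∫⁻ x, ∏ k ∈ T, g k x ∂Measure.pi μ ≤ B ^ T.card := by
  induction T using Finset.induction_on_max with
  | empty => simp
  | insert k T hlt ih =>
    obtain ⟨i, hik, hi⟩ := hS k
    have hkT : k ∉ T := fun hk => (hlt k hk).false
    simp only [Finset.prod_insert hkT, Finset.card_insert_of_notMem hkT, pow_succ']
    have hfresh : ∀ x y, ∏ j ∈ T, g j (update x i y) = ∏ j ∈ T, g j x := fun x y =>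
      Finset.prod_congr rfl fun j hj => hgS j fun l hl =>
        update_of_ne (by rintro rfl; exact hi j (hlt j hj) hl) _ _
    calc ∫⁻ x, g k x * ∏ j ∈ T, g j x ∂Measure.pi μ
        ≤ B * ∫⁻ x, ∏ j ∈ T, g j x ∂Measure.pi μ :=
          lintegral_mul_le_of_lintegral_update_le μ (Finset.measurable_prod T fun j _ => hg j)
            (hg k) hfresh (hB k i hik)
      _ ≤ B * B ^ T.card := by gcongr

end FreshCoordinate

section FractionalMoment

variable {s : ℝ}

theorem lintegral_Ioc_rpow_neg (hs1 : s < 1) :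
    ∫⁻ u in Ioc (0 : ℝ) 1, ENNReal.ofReal (u ^ (-s)) = ENNReal.ofReal (1 / (1 - s)) := by
  have hint : IntegrableOn (fun u : ℝ => u ^ (-s)) (Ioc 0 1) :=
    (intervalIntegrable_iff_integrableOn_Ioc_of_le zero_le_one).1
      (intervalIntegral.intervalIntegrable_rpow' (by linarith))
  rw [← ofReal_integral_eq_lintegral_ofReal hint
      (ae_restrict_of_forall_mem measurableSet_Ioc fun u hu => Real.rpow_nonneg hu.1.le _),
    ← intervalIntegral.integral_of_le zero_le_one, integral_rpow (Or.inl (by linarith)),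
    Real.zero_rpow (by linarith), Real.one_rpow]
  ring_nf

theorem lintegral_Icc_abs_rpow_neg (hs1 : s < 1) :
    ∫⁻ u in Icc (-1 : ℝ) 1, ENNReal.ofReal (|u| ^ (-s)) = ENNReal.ofReal (2 / (1 - s)) := by
  have hpos : ∫⁻ u in Ioc (0 : ℝ) 1, ENNReal.ofReal (|u| ^ (-s))
      = ENNReal.ofReal (1 / (1 - s)) := by
    rw [← lintegral_Ioc_rpow_neg hs1]
    exact setLIntegral_congr_fun measurableSet_Ioc fun u hu => by rw [abs_of_pos hu.1]
  have hneg : ∫⁻ u in Icc (-1 : ℝ) 0, ENNReal.ofReal (|u| ^ (-s))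
      = ∫⁻ u in Ioc (0 : ℝ) 1, ENNReal.ofReal (|u| ^ (-s)) := by
    have := (Measure.measurePreserving_neg (volume : Measure ℝ)).setLIntegral_comp_emb
      (Homeomorph.neg ℝ).measurableEmbedding (fun u => ENNReal.ofReal (|u| ^ (-s))) (Icc 0 1)
    simp only [abs_neg, image_neg_Icc, neg_zero] at this
    rw [← this, setLIntegral_congr Ioc_ae_eq_Icc]
  rw [← Icc_union_Ioc_eq_Icc (by norm_num) zero_le_one,
    lintegral_union measurableSet_Ioc
      ((Iic_disjoint_Ioi le_rfl).mono Icc_subset_Iic_self Ioc_subset_Ioi_self), hneg, hpos,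
    ← ENNReal.ofReal_add (by bound) (by bound)]
  ring_nf

theorem lintegral_abs_rpow_neg_le {ν : Measure ℝ} [IsProbabilityMeasure ν] {C : ℝ≥0∞}
    (hν : ν ≤ C • volume) (hs : 0 ≤ s) (hs1 : s < 1) :
    ∫⁻ u, ENNReal.ofReal (|u| ^ (-s)) ∂ν ≤ C * ENNReal.ofReal (2 / (1 - s)) + 1 := by
  have hnear : ∫⁻ u in Icc (-1) 1, ENNReal.ofReal (|u| ^ (-s)) ∂ν
      ≤ C * ENNReal.ofReal (2 / (1 - s)) :=
    calc ∫⁻ u in Icc (-1) 1, ENNReal.ofReal (|u| ^ (-s)) ∂ν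
        ≤ ∫⁻ u in Icc (-1) 1, ENNReal.ofReal (|u| ^ (-s)) ∂(C • volume) :=
          lintegral_mono' (Measure.restrict_mono le_rfl hν) le_rfl
      _ = C * ENNReal.ofReal (2 / (1 - s)) := by
          rw [Measure.restrict_smul, lintegral_smul_measure, lintegral_Icc_abs_rpow_neg hs1,
            smul_eq_mul]
  have hfar : ∫⁻ u in (Icc (-1) 1)ᶜ, ENNReal.ofReal (|u| ^ (-s)) ∂ν ≤ 1 :=
    calc ∫⁻ u in (Icc (-1) 1)ᶜ, ENNReal.ofReal (|u| ^ (-s)) ∂ν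
        ≤ ∫⁻ _ in (Icc (-1) 1)ᶜ, 1 ∂ν := by
          refine setLIntegral_mono' measurableSet_Icc.compl fun u hu => ofReal_le_one.2 ?_
          rw [mem_compl_iff, mem_Icc, ← abs_le, not_le] at hu
          exact Real.rpow_le_one_of_one_le_of_nonpos hu.le (by linarith)
      _ ≤ 1 := by
          rw [setLIntegral_one]
          exact prob_le_one
  rw [← lintegral_add_compl _ measurableSet_Icc]
  exact add_le_add hnear hfar

theorem map_mul_add_le_smul_volume {ν : Measure ℝ} {C : ℝ≥0∞} (hν : ν ≤ C • volume) {t : ℝ}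
    (ht : t ≠ 0) (c : ℝ) :
    ν.map (fun y => t * y + c) ≤ (C * ENNReal.ofReal |t⁻¹|) • volume :=
  calc ν.map (fun y => t * y + c) ≤ (C • volume).map ((· + c) ∘ (t * ·)) :=
        Measure.map_mono hν (by fun_prop)
    _ = (C * ENNReal.ofReal |t⁻¹|) • volume := by
        rw [← Measure.map_map (measurable_add_const c) (measurable_const_mul t), Measure.map_smul,
          Real.map_volume_mul_left ht, Measure.map_smul, map_add_right_eq_self, smul_smul]

theorem lintegral_abs_mul_add_rpow_neg_le {ν : Measure ℝ} [IsProbabilityMeasure ν] {C : ℝ≥0∞}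
    (hν : ν ≤ C • volume) (hs : 0 ≤ s) (hs1 : s < 1) {t : ℝ} (ht : t ≠ 0) (c : ℝ) :
    ∫⁻ y, ENNReal.ofReal (|t * y + c| ^ (-s)) ∂ν
      ≤ C * ENNReal.ofReal |t⁻¹| * ENNReal.ofReal (2 / (1 - s)) + 1 := by
  have hmeas : Measurable fun y : ℝ => t * y + c := by fun_prop
  have := Measure.isProbabilityMeasure_map (μ := ν) hmeas.aemeasurable
  rw [← lintegral_map (f := fun u => ENNReal.ofReal (|u| ^ (-s))) (by measurability) hmeas]
  exact lintegral_abs_rpow_neg_le (map_mul_add_le_smul_volume hν ht c) hs hs1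

end FractionalMoment

/-- Fractional-moment bound for a hierarchical family of denominators
`D_k = 2·∑_{i ∈ S_k} h_i + a_k`, where each `S_k` contains a fresh index not appearing
in any earlier `S_j`: `E ∏_k |D_k|^{−s} ≤ ρ₁^n` with `ρ₁` depending only on `ρ₀, s`. -/
theorem stmt2 (ρ₀ s : ℝ) (hρ₀ : 0 < ρ₀) (hs : 0 < s) (hs1 : s < 1) :
    ∃ ρ₁ : ℝ, 0 < ρ₁ ∧
      ∀ (Ω : Type) (_ : MeasurableSpace Ω) (μ : Measure Ω), IsProbabilityMeasure μ →
      ∀ (n : ℕ) (h : Fin n → Ω → ℝ), (∀ i, Measurable (h i)) →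
      ProbabilityTheory.iIndepFun h μ →
      ∀ (f : Fin n → ℝ → ℝ≥0∞),
      (∀ i x, f i x ≤ ENNReal.ofReal ρ₀) →
      (∀ i, μ.map (h i) = volume.withDensity (f i)) →
      ∀ (S : Fin n → Finset (Fin n)) (a : Fin n → ℝ),
      (∀ k : Fin n, ∃ i ∈ S k, ∀ j : Fin n, j < k → i ∉ S j) →
      ∫⁻ ω, ∏ k : Fin n,
          ENNReal.ofReal (|2 * ∑ i ∈ S k, h i ω + a k| ^ (-s)) ∂μ ≤
        ENNReal.ofReal (ρ₁ ^ n) := by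
  have h1s : 0 < 1 - s := by linarith
  refine ⟨ρ₀ / (1 - s) + 1, by positivity, ?_⟩
  intro Ω _ μ _ n h hh hind f hf hfh S a hS
  have := fun i => Measure.isProbabilityMeasure_map (μ := μ) (hh i).aemeasurable
  have hdensity : ∀ i, μ.map (h i) ≤ ENNReal.ofReal ρ₀ • volume := fun i => by
    rw [hfh i, ← withDensity_const]
    exact withDensity_mono (ae_of_all _ (hf i))
  have hρ₁ : ENNReal.ofReal ρ₀ * ENNReal.ofReal |2⁻¹| * ENNReal.ofReal (2 / (1 - s)) + 1
      = ENNReal.ofReal (ρ₀ / (1 - s) + 1) := by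
    rw [← ofReal_mul hρ₀.le, ← ofReal_mul (by positivity), ← ofReal_one,
      ← ofReal_add (by positivity) zero_le_one]
    congr 2
    rw [abs_of_pos (by norm_num)]
    ring
  have hfresh := lintegral_prod_le_pow_of_fresh (fun i => μ.map (h i))
    (g := fun k x => ENNReal.ofReal (|2 * ∑ i ∈ S k, x i + a k| ^ (-s)))
    (fun k => by measurability) (S := fun k => S k)
    (fun k x y hxy => by simp only [Finset.sum_congr rfl fun i hi => hxy i hi]) hS
    (fun k i hi x => by
      simpa only [Finset.sum_update_of_mem hi, mul_add, add_assoc] using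
        lintegral_abs_mul_add_rpow_neg_le (hdensity i) hs.le hs1 two_ne_zero _)
    Finset.univ
  rw [← lintegral_map (f := fun x => ∏ k, ENNReal.ofReal (|2 * ∑ i ∈ S k, x i + a k| ^ (-s)))
      (by measurability) (measurable_pi_lambda _ hh),
    hind.map_fun_eq_pi_map fun i => (hh i).aemeasurable, ofReal_pow (by positivity), ← hρ₁]
  simpa using hfresh
end

section
/- Let A be an antisymmetric matrix and H₀ a diagonal matrix, and suppose J is a matrix with [A, H₀] = −J. Then e^A (H₀ + J) e^{−A} = H₀ + Σ_{n≥1} (n/(n+1)!) (ad A)ⁿ J, where ad A denotes the commutator map X ↦ [A, X]. -/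
/-!
Conjugation by `e^A` is the exponential of `ad A = L_A - R_A`, since left and right
multiplication by `A` commute. Because `ad A H₀ = -J`, the series `e^{ad A} (H₀ + J)`
telescopes: the term `(ad A)ⁿ J` receives `1/n!` from `J` and `-1/(n+1)!` from `H₀`,
and `1/n! - 1/(n+1)! = n/(n+1)!`.
-/

open Matrix NormedSpace ContinuousLinearMap
open scoped Nat

variable {𝕂 : Type*} [RCLike 𝕂]

theorem hasSum_nat_succ_of_hasSum {M : Type*} [AddCommGroup M] [TopologicalSpace M]
    [IsTopologicalAddGroup M] {f : ℕ → M} {a : M} (h : HasSum f a) :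
    HasSum (fun n => f (n + 1)) (a - f 0) := by
  simpa using (hasSum_nat_add_iff' 1).mpr h

theorem inv_factorial_sub_inv_factorial_succ (n : ℕ) :
    ((n + 1)! : 𝕂)⁻¹ - ((n + 2)! : 𝕂)⁻¹ = ((n + 1 : ℕ) : 𝕂) / ((n + 2)! : 𝕂) := by
  have hf : ((n + 1)! : 𝕂) ≠ 0 := Nat.cast_ne_zero.mpr (Nat.factorial_ne_zero _)
  have hn : ((n + 2 : ℕ) : 𝕂) ≠ 0 := Nat.cast_ne_zero.mpr (Nat.succ_ne_zero _)
  rw [Nat.factorial_succ (n + 1), Nat.cast_mul]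
  field_simp
  push_cast
  ring

section BanachAlgebra

variable {𝔸 𝔹 : Type*} [NormedRing 𝔸] [NormedAlgebra 𝕂 𝔸] [NormedRing 𝔹] [NormedAlgebra 𝕂 𝔹]

theorem map_exp_of_map_pow [CompleteSpace 𝔸] [CompleteSpace 𝔹] (Φ : 𝔸 →L[𝕂] 𝔹) {a : 𝔸} {b : 𝔹}
    (h : ∀ n, Φ (a ^ n) = b ^ n) : Φ (exp a) = exp b :=
  ((exp_series_hasSum_exp' (𝕂 := 𝕂) a).mapL Φ).unique <| by
    simpa only [Function.comp_def, map_smul, h] using exp_series_hasSum_exp' (𝕂 := 𝕂) b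

theorem mul_apply_pow (a : 𝔸) (n : ℕ) : mul 𝕂 𝔸 (a ^ n) = mul 𝕂 𝔸 a ^ n := by
  induction n with
  | zero => ext; simp
  | succ n ih => rw [pow_succ', pow_succ', ← ih]; ext; simp [mul_assoc]

theorem flip_mul_apply_pow (a : 𝔸) (n : ℕ) :
    (mul 𝕂 𝔸).flip (a ^ n) = (mul 𝕂 𝔸).flip a ^ n := by
  induction n with
  | zero => ext; simp
  | succ n ih => rw [pow_succ, pow_succ', ← ih]; ext; simp [mul_assoc]

variable (𝕂) in
noncomputable def adL (a : 𝔸) : 𝔸 →L[𝕂] 𝔸 :=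
  mul 𝕂 𝔸 a - (mul 𝕂 𝔸).flip a

theorem adL_pow_apply (a x : 𝔸) (n : ℕ) :
    (adL 𝕂 a ^ n) x = (fun y => a * y - y * a)^[n] x := by
  rw [FunLike.coe_pow_eq_iterate]
  rfl

theorem exp_mul_mul_exp_neg_eq_exp_adL [CompleteSpace 𝔸] (a x : 𝔸) :
    exp a * x * exp (-a) = exp (adL 𝕂 a) x := by
  have hcomm : Commute (mul 𝕂 𝔸 a) ((mul 𝕂 𝔸).flip (-a)) := by
    ext; simp [mul_assoc]
  have hsplit : adL 𝕂 a = mul 𝕂 𝔸 a + (mul 𝕂 𝔸).flip (-a) := by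
    simp [adL, sub_eq_add_neg]
  have hball (T : 𝔸 →L[𝕂] 𝔸) : T ∈ Metric.eball 0 (expSeries 𝕂 (𝔸 →L[𝕂] 𝔸)).radius :=
    (expSeries_radius_eq_top 𝕂 (𝔸 →L[𝕂] 𝔸)).symm ▸ edist_lt_top _ _
  rw [hsplit, exp_add_of_commute_of_mem_ball hcomm (hball _) (hball _),
    ← map_exp_of_map_pow (mul 𝕂 𝔸) (mul_apply_pow a),
    ← map_exp_of_map_pow (mul 𝕂 𝔸).flip (flip_mul_apply_pow (-a))]
  simp [mul_assoc]

end BanachAlgebra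

section BanachSpace

variable {E : Type*} [NormedAddCommGroup E] [NormedSpace 𝕂 E] [CompleteSpace E]

theorem hasSum_exp_apply (T : E →L[𝕂] E) (x : E) :
    HasSum (fun n => (n !⁻¹ : 𝕂) • (T ^ n) x) (exp T x) := by
  simpa only [map_smul, apply_apply] using
    (exp_series_hasSum_exp' (𝕂 := 𝕂) T).mapL (apply 𝕂 E x)

theorem exp_apply_add_of_apply_eq_neg (T : E →L[𝕂] E) {x y : E} (h : T x = -y) :
    exp T (x + y) = x + ∑' n : ℕ, (((n + 1 : ℕ) : 𝕂) / ((n + 2)! : 𝕂)) • (T ^ (n + 1)) y := by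
  have hx : HasSum (fun n => ((n + 1)! : 𝕂)⁻¹ • (T ^ n) y) (x - exp T x) := by
    simpa [pow_succ, h] using (hasSum_nat_succ_of_hasSum (hasSum_exp_apply T x)).neg
  have hsum := (hasSum_nat_succ_of_hasSum (hasSum_exp_apply T y)).sub
    (hasSum_nat_succ_of_hasSum hx)
  simp only [← sub_smul, inv_factorial_sub_inv_factorial_succ] at hsum
  rw [hsum.tsum_eq, map_add]
  simp only [Nat.factorial_zero, Nat.factorial_one, Nat.cast_one, inv_one, pow_zero,
    one_apply_eq_self, one_smul, zero_add, sub_sub_sub_cancel_right]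
  abel

end BanachSpace

theorem stmt4_general {N : ℕ} (A H₀ J : Matrix (Fin N) (Fin N) ℝ)
    (hcomm : A * H₀ - H₀ * A = -J) :
    NormedSpace.exp A * (H₀ + J) * NormedSpace.exp (-A) =
      H₀ + ∑' n : ℕ,
        (((n + 1 : ℕ) : ℝ) / ((n + 2).factorial : ℝ)) •
          (fun X => A * X - X * A)^[n + 1] J := by
  -- Any Banach algebra norm will do. Its ring structure agrees with the statement's only up to
  -- defeq, hence `.trans` and the final `rfl` instead of rewriting.
  let : NormedRing (Matrix (Fin N) (Fin N) ℝ) := Matrix.linftyOpNormedRing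
  let : NormedAlgebra ℝ (Matrix (Fin N) (Fin N) ℝ) := Matrix.linftyOpNormedAlgebra
  have hJ : adL ℝ A H₀ = -J := hcomm
  refine (exp_mul_mul_exp_neg_eq_exp_adL (𝕂 := ℝ) A (H₀ + J)).trans ?_
  rw [exp_apply_add_of_apply_eq_neg _ hJ]
  simp only [adL_pow_apply]
  rfl

/-- The ad-expansion identity of the KAM diagonalization step: if `A` is antisymmetric,
`H₀` is diagonal, and `[A, H₀] = −J`, then
`e^A (H₀ + J) e^{−A} = H₀ + Σ_{n≥1} (n/(n+1)!) (ad A)ⁿ J`. -/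
theorem stmt4 {N : ℕ} (A H₀ J : Matrix (Fin N) (Fin N) ℝ)
    (e : Fin N → ℝ) (hdiag : H₀ = Matrix.diagonal e)
    (hanti : Aᵀ = -A)
    (hcomm : A * H₀ - H₀ * A = -J) :
    NormedSpace.exp A * (H₀ + J) * NormedSpace.exp (-A) =
      H₀ + ∑' n : ℕ,
        (((n + 1 : ℕ) : ℝ) / ((n + 2).factorial : ℝ)) •
          (fun X => A * X - X * A)^[n + 1] J :=
  stmt4_general A H₀ J hcomm
end
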